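/- arXiv:1102.1247 — 3 statements merged into one kernel-verified Lean document; each statement's English description precedes it below -/
import Mathlib

section
/- Let V be a random vector on F_2^m with distribution μ. Define the branching process: V^∅ = V, and for a sign sequence b ∈ {−,+}^k, V^{b−} = V^b + (V^b)' and V^{b+} = (V^b)', where primed variables denote the i.i.d.-copy construction applied recursively (equivalently, { V^{b} : b ∈ {−,+}^k } has the same joint distribution as the columns of X·G_{2^k} for X an m×2^k matrix with i.i.d. μ-distributed columns). Let b_1, b_2, … be i.i.d. uniform on {−,+} and for S ⊆ {1,…,m} set η_k[S] = H(V^{b_1…b_k}[S] | V^{c_1…c_k} for all (c_1…c_k) lexicographically smaller than (b_1…b_k), with − < +). Then for every n = 2^k and every set D ⊆ [0, |S|], (1/n)·|{ j ∈ {1,…,n} : H(Y_j[S] | Y^{j-1}) ∈ D }| = P{ η_k[S] ∈ D }, where Y = X·G_n with X having i.i.d. μ-distributed columns. -/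
/-! `η_k[S]` is the conditional entropy of a column of the polar transform of a random matrix
with i.i.d. columns of law `ν`, and the polarization process uses the same transform of `X`. Entropy
only depends on the law of the random variable, and these two matrices have the same law, so the
two entropies agree column by column. What remains is counting: `iota` is a bijection from sign
sequences onto column indices, so it carries the uniform law on `{−,+}^k` to the normalised
counting measure on `Fin (2 ^ k)`. -/

open MeasureTheory ProbabilityTheory Filter
open scoped Classical

/-- Shannon entropy (in bits) of a finite-valued random variable `X` on `(Ω, μ)`:
`H(X) = ∑ₓ P(X = x) log₂ (1 / P(X = x))`. -/
noncomputable def shEnt {Ω : Type*} [MeasurableSpace Ω] (μ : Measure Ω)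
    {α : Type*} [Fintype α] (X : Ω → α) : ℝ :=
  (∑ x : α, Real.negMulLog ((μ (X ⁻¹' {x})).toReal)) / Real.log 2

/-- Conditional Shannon entropy (in bits) of discrete random variables:
`H(X | Y) = H(X, Y) - H(Y)`. -/
noncomputable def cEnt {Ω : Type*} [MeasurableSpace Ω] (μ : Measure Ω)
    {α β : Type*} [Fintype α] [Fintype β] (X : Ω → α) (Y : Ω → β) : ℝ :=
  shEnt μ (fun ω => (X ω, Y ω)) - shEnt μ Y

/-- Shannon entropy (in bits) of a distribution on a finite set. -/
noncomputable def distEnt {α : Type*} [MeasurableSpace α] [Fintype α] (ν : Measure α) : ℝ :=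
  (∑ x : α, Real.negMulLog ((ν {x}).toReal)) / Real.log 2

/-- The binary entropy function `h(p) = -p log₂ p - (1-p) log₂ (1-p)`. -/
noncomputable def binEnt (p : ℝ) : ℝ :=
  (Real.negMulLog p + Real.negMulLog (1 - p)) / Real.log 2

/-- The Bernoulli(p) distribution on `F₂` (probability `p` of the outcome `1`). -/
noncomputable def bern (p : ℝ) : Measure (ZMod 2) :=
  ENNReal.ofReal (1 - p) • Measure.dirac 0 + ENNReal.ofReal p • Measure.dirac 1

/-- `G k` is the `2^k × 2^k` matrix over `F₂` given by the `k`-fold Kronecker power of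
`[[1,0],[1,1]]`, in closed form: the `(i,j)` entry is `1` iff each binary digit of `j`
is dominated by the corresponding binary digit of `i` (for the single factor
`[[1,0],[1,1]]`, the `(a,b)` entry is `1` iff the bit `b` is dominated by the bit `a`,
and the Kronecker power multiplies these bitwise conditions). -/
def G (k : ℕ) : Matrix (Fin (2 ^ k)) (Fin (2 ^ k)) (ZMod 2) :=
  Matrix.of fun i j => if j.val &&& i.val = j.val then 1 else 0

/-- The lexicographic enumeration of sign sequences: `iota k b` is the index (from `0`)
of `b ∈ {−,+}^k` (coded by `Bool`, `false = −`, `true = +`, with `b 0` the first sign)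
in the lexicographic order with `− < +`; `b 0` is the most significant digit. -/
def iota (k : ℕ) (b : Fin k → Bool) : Fin (2 ^ k) :=
  finFunctionFinEquiv (fun i => if b i.rev then 1 else 0)

/-- `η_k[S]` as a function of the sign sequence `(b_1,…,b_k)`: the conditional entropy
`H(V^{b_1…b_k}[S] | V^{c_1…c_k}, ∀ (c_1…c_k) < (b_1…b_k))`, where the branching process
`V^∅ = V`, `V^{b-} = V^b + (V^b)'`, `V^{b+} = (V^b)'` is realized — as in its equivalent
description — through the polar transform: `{V^b : b ∈ {−,+}^k}` is the family of columns
of `X ⬝ G_{2^k}` (column `iota k b` for the sign sequence `b`), where `X` is an `m × 2^k`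
matrix with i.i.d. columns of law `ν` (the law of `V`), and sign sequences `c < b`
correspond to columns with smaller index. -/
noncomputable def etaFun {m : ℕ} (ν : Measure (Fin m → ZMod 2)) (k : ℕ) (S : Finset (Fin m))
    (b : Fin k → Bool) : ℝ :=
  cEnt (Measure.pi fun _ : Fin (2 ^ k) => ν)
    (fun x (i : S) => (Matrix.of (fun r j => x j r) * G k) i.1 (iota k b))
    (fun x (j' : Fin (iota k b).val) (r : Fin m) =>
      (Matrix.of (fun r j => x j r) * G k) r (j'.castLE (iota k b).isLt.le))

lemma shEnt_map {Ω α : Type*} [MeasurableSpace Ω] [MeasurableSpace α]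
    [DiscreteMeasurableSpace α] (μ : Measure Ω) {T : Ω → α} (hT : Measurable T)
    {γ : Type*} [Fintype γ] (Z : α → γ) :
    shEnt (μ.map T) Z = shEnt μ (Z ∘ T) := by
  simp only [shEnt, Measure.map_apply hT MeasurableSet.of_discrete, Set.preimage_comp]

lemma cEnt_map {Ω α : Type*} [MeasurableSpace Ω] [MeasurableSpace α]
    [DiscreteMeasurableSpace α] (μ : Measure Ω) {T : Ω → α} (hT : Measurable T)
    {γ δ : Type*} [Fintype γ] [Fintype δ] (Z : α → γ) (W : α → δ) :
    cEnt (μ.map T) Z W = cEnt μ (Z ∘ T) (W ∘ T) := by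
  rw [cEnt, cEnt, shEnt_map μ hT, shEnt_map μ hT]
  rfl

lemma iota_bijective (k : ℕ) : Function.Bijective (iota k) := by
  refine (Fintype.bijective_iff_injective_and_card _).2 ⟨fun b b' h => ?_, by simp⟩
  funext j
  have hj := congrFun (finFunctionFinEquiv.injective h) j.rev
  simp only [Fin.rev_rev] at hj
  cases hb : b j <;> cases hb' : b' j <;> simp_all

lemma card_subtype_div_card_eq_uniformOfFintype {α β : Type*} [Fintype α] [Nonempty α]
    [MeasurableSpace α] [MeasurableSingletonClass α] [Fintype β] (e : α ≃ β) (P : β → Prop) :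
    (Nat.card {j // P j} : ℝ) / Fintype.card β
      = ((PMF.uniformOfFintype α).toMeasure {a | P (e a)}).toReal := by
  rw [PMF.toMeasure_uniformOfFintype_apply _ (Set.toFinite _).measurableSet,
    ENNReal.toReal_div, ENNReal.toReal_natCast, ENNReal.toReal_natCast, Fintype.card_congr e,
    Nat.card_congr (e.subtypeEquiv fun _ => Iff.rfl).symm, Nat.card_eq_fintype_card]
  rfl

theorem statement7_general (m : ℕ) (ν : Measure (Fin m → ZMod 2))
    (k : ℕ) (Ω : Type) [MeasurableSpace Ω] (μ : Measure Ω)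
    (X : Ω → Fin m → Fin (2 ^ k) → ZMod 2) (hmeas : Measurable X)
    (hiid : μ.map (fun ω => fun j i => X ω i j) = Measure.pi fun _ : Fin (2 ^ k) => ν)
    (S : Finset (Fin m)) (D : Set ℝ) :
    (Nat.card {j : Fin (2 ^ k) //
        cEnt μ (fun ω (i : S) => (Matrix.of (X ω) * G k) i.1 j)
          (fun ω (j' : Fin j.val) (r : Fin m) =>
            (Matrix.of (X ω) * G k) r (j'.castLE j.isLt.le)) ∈ D} : ℝ) / 2 ^ k
      = ((PMF.uniformOfFintype (Fin k → Bool)).toMeasure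
          {b | etaFun ν k S b ∈ D}).toReal := by
  have hT : Measurable fun ω j i => X ω i j := by fun_prop
  have hcard : (2 : ℝ) ^ k = Fintype.card (Fin (2 ^ k)) := by simp
  rw [hcard, card_subtype_div_card_eq_uniformOfFintype (Equiv.ofBijective _ (iota_bijective k))]
  simp only [etaFun, ← hiid, cEnt_map _ hT]
  rfl

/-- correspondence lemma between the polarization process and the
branching entropy process. For `Y = X ⬝ G_n` with i.i.d. `ν`-distributed columns and
`b_1,…,b_k` i.i.d. uniform signs: for every `D ⊆ [0,|S|]`,
`(1/n)|{j : H(Y_j[S] | Y^{j-1}) ∈ D}| = P{η_k[S] ∈ D}`. -/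
theorem statement7 (m : ℕ) (ν : Measure (Fin m → ZMod 2)) [IsProbabilityMeasure ν]
    (k : ℕ) (Ω : Type) [MeasurableSpace Ω] (μ : Measure Ω) [IsProbabilityMeasure μ]
    (X : Ω → Fin m → Fin (2 ^ k) → ZMod 2) (hmeas : Measurable X)
    (hiid : μ.map (fun ω => fun j i => X ω i j) = Measure.pi fun _ : Fin (2 ^ k) => ν)
    (S : Finset (Fin m)) (D : Set ℝ) (hD : D ⊆ Set.Icc 0 (S.card : ℝ)) :
    (Nat.card {j : Fin (2 ^ k) //
        cEnt μ (fun ω (i : S) => (Matrix.of (X ω) * G k) i.1 j)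
          (fun ω (j' : Fin j.val) (r : Fin m) =>
            (Matrix.of (X ω) * G k) r (j'.castLE j.isLt.le)) ∈ D} : ℝ) / 2 ^ k
      = ((PMF.uniformOfFintype (Fin k → Bool)).toMeasure
          {b | etaFun ν k S b ∈ D}).toReal :=
  statement7_general m ν k Ω μ X hmeas hiid S D
end

section
/- Let A_1, A_2 be binary random variables and B_1, B_2 discrete random variables whose joint distribution has the form P(A_1=a_1, A_2=a_2, B_1=b_1, B_2=b_2) = (1/4)·Q(b_1 | a_1 + a_2)·Q(b_2 | a_2) for some conditional probability kernel Q from F_2 to a finite set (the addition a_1 + a_2 over F_2). Then for every a > 0 there exists b > 0 such that H(A_2|B_2) − H(A_2 | B_1, B_2, A_1) ≤ b implies H(A_2|B_2) ∈ [0, a] ∪ [1−a, 1]. -/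
open MeasureTheory ProbabilityTheory Filter
open scoped Classical

/-! Write `H = H(A₂ | B₂)` and `H⁺ = H(A₂ | B₁, B₂, A₁)`. Given `B₂ = y`, the bit `A₂` is
Bernoulli(`p_y`) and `(B₁, A₁)` is the output of a fixed channel `V` on the input `A₂`. Strong
concavity of the binary entropy (a binary Pinsker inequality) makes the conditional entropy drop
at least `p_y² (1 - p_y)² Δ(V) / log 2`, where `Δ` is the triangular discrimination. A reverse
Pinsker inequality gives `Δ(V) ≥ 2 log 2 (1 - H)`, and `h(p)⁴ ≤ 81 p (1 - p)` together with
Jensen gives `∑ P(y) p_y² (1 - p_y)² ≥ (log 2)⁸ H⁸ / 6561`. Hence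
`H - H⁺ ≥ 2 (log 2)⁸ (1 - H) H⁸ / 6561`, which is bounded below when `H` stays away from
`0` and `1`. -/

open Real

namespace Arikan

lemma binEnt_eq_binEntropy_div (p : ℝ) : binEnt p = binEntropy p / log 2 := by
  rw [binEnt, binEntropy_eq_negMulLog_add_negMulLog_one_sub]

lemma binEnt_nonneg {p : ℝ} (h0 : 0 ≤ p) (h1 : p ≤ 1) : 0 ≤ binEnt p := by
  rw [binEnt_eq_binEntropy_div]
  exact div_nonneg (binEntropy_nonneg h0 h1) (log_pos one_lt_two).le

lemma binEnt_le_one (p : ℝ) : binEnt p ≤ 1 := by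
  rw [binEnt_eq_binEntropy_div, div_le_one (log_pos one_lt_two)]
  exact binEntropy_le_log_two

lemma mul_log_two_sub_negMulLog_le {x : ℝ} (hx : 0 ≤ x) :
    x * log 2 - negMulLog x ≤ x * (2 * x - 1) := by
  rcases hx.eq_or_lt with rfl | hx
  · simp
  have hlog := log_le_sub_one_of_pos (by positivity : 0 < 2 * x)
  rw [log_mul two_ne_zero hx.ne'] at hlog
  rw [negMulLog]
  nlinarith [mul_le_mul_of_nonneg_left hlog hx.le]

lemma log_two_sub_binEntropy_le {p : ℝ} (h0 : 0 ≤ p) (h1 : p ≤ 1) :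
    log 2 - binEntropy p ≤ (1 - 2 * p) ^ 2 := by
  have hp := mul_log_two_sub_negMulLog_le h0
  have hq := mul_log_two_sub_negMulLog_le (sub_nonneg.2 h1)
  rw [binEntropy_eq_negMulLog_add_negMulLog_one_sub]
  nlinarith

lemma negMulLog_le_two_sqrt {x : ℝ} (hx : 0 ≤ x) : negMulLog x ≤ 2 * √x := by
  rcases hx.eq_or_lt with rfl | hx
  · simp
  have hs : 0 < √x := sqrt_pos.2 hx
  have hlog := log_le_sub_one_of_pos (inv_pos.2 hs)
  rw [log_inv, log_sqrt hx.le] at hlog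
  have hxs : x * (√x)⁻¹ = √x := by
    rw [← mul_self_sqrt hx.le, sqrt_mul_self hs.le, mul_assoc, mul_inv_cancel₀ hs.ne', mul_one]
  rw [negMulLog]
  nlinarith [mul_le_mul_of_nonneg_left hlog hx.le]

lemma negMulLog_one_sub_le {x : ℝ} (hx : x ≤ 1) : negMulLog (1 - x) ≤ x := by
  rcases hx.eq_or_lt with rfl | hx
  · simp
  have hpos : 0 < 1 - x := by linarith
  have hlog := log_le_sub_one_of_pos (inv_pos.2 hpos)
  rw [log_inv] at hlog
  have := mul_le_mul_of_nonneg_left hlog hpos.le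
  rw [mul_sub, mul_inv_cancel₀ hpos.ne'] at this
  rw [negMulLog]
  linarith

lemma binEntropy_sq_le {p : ℝ} (h0 : 0 ≤ p) (h1 : p ≤ 1) : binEntropy p ^ 2 ≤ 9 * p := by
  have hp : p ≤ √p := by
    simpa [sqrt_mul_self h0] using sqrt_le_sqrt (mul_le_of_le_one_left h0 h1 : p * p ≤ p)
  have hle : binEntropy p ≤ 3 * √p := by
    rw [binEntropy_eq_negMulLog_add_negMulLog_one_sub]
    linarith [negMulLog_le_two_sqrt h0, negMulLog_one_sub_le h1]
  calc binEntropy p ^ 2 ≤ (3 * √p) ^ 2 := pow_le_pow_left₀ (binEntropy_nonneg h0 h1) hle 2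
    _ = 9 * p := by rw [mul_pow, sq_sqrt h0]; norm_num

lemma binEntropy_pow_four_le {p : ℝ} (h0 : 0 ≤ p) (h1 : p ≤ 1) :
    binEntropy p ^ 4 ≤ 81 * (p * (1 - p)) := by
  have hp := binEntropy_sq_le h0 h1
  have hq := binEntropy_sq_le (sub_nonneg.2 h1) (sub_le_self 1 h0)
  rw [binEntropy_one_sub] at hq
  calc binEntropy p ^ 4 = binEntropy p ^ 2 * binEntropy p ^ 2 := by ring
    _ ≤ (9 * p) * (9 * (1 - p)) := mul_le_mul hp hq (sq_nonneg _) (by linarith)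
    _ = 81 * (p * (1 - p)) := by ring

lemma two_mul_sub_two_sqrt_mul_le {x q : ℝ} (hx : 0 ≤ x) (hq : 0 < q) :
    2 * x - 2 * √(x * q) ≤ x * (log x - log q) := by
  rcases hx.eq_or_lt with rfl | hx
  · simp
  have hsx : 0 < √x := sqrt_pos.2 hx
  have hlog := log_le_sub_one_of_pos (div_pos (sqrt_pos.2 hq) hsx)
  rw [log_div (sqrt_pos.2 hq).ne' hsx.ne', log_sqrt hq.le, log_sqrt hx.le] at hlog
  have hxs : x * (√q / √x) = √(x * q) := by
    rw [sqrt_mul hx.le]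
    field_simp
    exact (sq_sqrt hx.le).symm
  nlinarith [mul_le_mul_of_nonneg_left hlog hx.le]

/-- The right-hand side is twice the squared Hellinger distance. -/
lemma sq_sub_le_two_sub_two_sqrt {x q : ℝ} (hx0 : 0 ≤ x) (hx1 : x ≤ 1) (hq0 : 0 ≤ q)
    (hq1 : q ≤ 1) :
    (x - q) ^ 2 ≤ 2 - 2 * (√(x * q) + √((1 - x) * (1 - q))) := by
  rw [sqrt_mul hx0, sqrt_mul (sub_nonneg.2 hx1)]
  set u := √x
  set v := √q
  set u' := √(1 - x)
  set v' := √(1 - q)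
  have hu : u ^ 2 = x := sq_sqrt hx0
  have hv : v ^ 2 = q := sq_sqrt hq0
  have hu' : u' ^ 2 = 1 - x := sq_sqrt (sub_nonneg.2 hx1)
  have hv' : v' ^ 2 = 1 - q := sq_sqrt (sub_nonneg.2 hq1)
  rw [← hu, ← hv]
  rw [← hu] at hu'
  rw [← hv] at hv'
  -- `(u, u')` and `(v, v')` are unit vectors; `u v + u' v'` is their inner product
  have hdiff : u ^ 2 - v ^ 2 = (u * v' - u' * v) * (u * v' + u' * v) := by
    linear_combination v ^ 2 * hu' - u ^ 2 * hv'
  have hsum : (u * v + u' * v') ^ 2 + (u * v' - u' * v) ^ 2 = 1 := by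
    linear_combination (v ^ 2 + v' ^ 2) * hu' + hv'
  have hcross : (u * v' + u' * v) ^ 2 + (u * v - u' * v') ^ 2 = 1 := by
    linear_combination (v ^ 2 + v' ^ 2) * hu' + hv'
  calc (u ^ 2 - v ^ 2) ^ 2 = (u * v' - u' * v) ^ 2 * (u * v' + u' * v) ^ 2 := by
        rw [hdiff]; ring
    _ ≤ (u * v' - u' * v) ^ 2 :=
        mul_le_of_le_one_right (sq_nonneg _) (by nlinarith [sq_nonneg (u * v - u' * v')])
    _ ≤ 2 - 2 * (u * v + u' * v') := by nlinarith [sq_nonneg (1 - (u * v + u' * v'))]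

/-- Binary Pinsker inequality (with constant `1` instead of the optimal `2`), in nats. -/
lemma sq_sub_le_binKL {x q : ℝ} (hx0 : 0 ≤ x) (hx1 : x ≤ 1) (hq0 : 0 < q) (hq1 : q < 1) :
    (x - q) ^ 2 ≤ x * (log x - log q) + (1 - x) * (log (1 - x) - log (1 - q)) := by
  have h := two_mul_sub_two_sqrt_mul_le hx0 hq0
  have h' := two_mul_sub_two_sqrt_mul_le (sub_nonneg.2 hx1) (sub_pos.2 hq1)
  have hH := sq_sub_le_two_sub_two_sqrt hx0 hx1 hq0.le hq1.le
  linarith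

/-- The gap to the tangent line at `q` is exactly the binary KL divergence. -/
lemma binEntropy_add_sq_le_tangent {x q : ℝ} (hx0 : 0 ≤ x) (hx1 : x ≤ 1) (hq0 : 0 < q)
    (hq1 : q < 1) :
    binEntropy x + (x - q) ^ 2 ≤ binEntropy q + (log (1 - q) - log q) * (x - q) := by
  have hKL := sq_sub_le_binKL hx0 hx1 hq0 hq1
  simp only [binEntropy_eq_negMulLog_add_negMulLog_one_sub, negMulLog]
  linarith

lemma sum_mul_binEntropy_add_sq_eq_zero {ι : Type*} (s : Finset ι) (w z : ι → ℝ)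
    (hw : ∀ i ∈ s, 0 ≤ w i) (hz : ∀ i ∈ s, 0 ≤ z i) (hmean : ∑ i ∈ s, w i * z i = 0) :
    ∑ i ∈ s, w i * (binEntropy (z i) + z i ^ 2) = 0 := by
  refine Finset.sum_eq_zero fun i hi => ?_
  have hwz := (Finset.sum_eq_zero_iff_of_nonneg fun j hj => mul_nonneg (hw j hj) (hz j hj)).1
    hmean i hi
  rcases mul_eq_zero.1 hwz with h | h <;> simp [h]

lemma sum_mul_binEntropy_add_sq_le {ι : Type*} (s : Finset ι) (w z : ι → ℝ) {q : ℝ}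
    (hw : ∀ i ∈ s, 0 ≤ w i) (hz0 : ∀ i ∈ s, 0 ≤ z i) (hz1 : ∀ i ∈ s, z i ≤ 1)
    (hq0 : 0 ≤ q) (hq1 : q ≤ 1) (hmean : ∑ i ∈ s, w i * z i = q * ∑ i ∈ s, w i) :
    ∑ i ∈ s, w i * (binEntropy (z i) + (z i - q) ^ 2) ≤ (∑ i ∈ s, w i) * binEntropy q := by
  rcases hq0.eq_or_lt with rfl | hq0
  · simp [sum_mul_binEntropy_add_sq_eq_zero s w z hw hz0 (by simpa using hmean)]
  rcases hq1.eq_or_lt with rfl | hq1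
  · have hmean' : ∑ i ∈ s, w i * (1 - z i) = 0 := by
      simp only [mul_sub, mul_one, Finset.sum_sub_distrib, hmean, one_mul, sub_self]
    have := sum_mul_binEntropy_add_sq_eq_zero s w (fun i => 1 - z i) hw
      (fun i hi => sub_nonneg.2 (hz1 i hi)) hmean'
    simp only [binEntropy_one_sub] at this
    rw [binEntropy_one, mul_zero, ← this]
    exact le_of_eq (Finset.sum_congr rfl fun i _ => by ring)
  have hlin : ∑ i ∈ s, w i * (z i - q) = 0 := by
    simp only [mul_sub, Finset.sum_sub_distrib, hmean, ← Finset.sum_mul]; ring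
  calc ∑ i ∈ s, w i * (binEntropy (z i) + (z i - q) ^ 2)
      ≤ ∑ i ∈ s, w i * (binEntropy q + (log (1 - q) - log q) * (z i - q)) :=
        Finset.sum_le_sum fun i hi => mul_le_mul_of_nonneg_left
          (binEntropy_add_sq_le_tangent (hz0 i hi) (hz1 i hi) hq0 hq1) (hw i hi)
    _ = (∑ i ∈ s, w i) * binEntropy q + (log (1 - q) - log q) * ∑ i ∈ s, w i * (z i - q) := by
        simp only [mul_add, Finset.sum_add_distrib, Finset.sum_mul, Finset.mul_sum]
        congr 1
        exact Finset.sum_congr rfl fun i _ => by ring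
    _ = (∑ i ∈ s, w i) * binEntropy q := by rw [hlin, mul_zero, add_zero]

/-- For an input bit with weights `(s (1 - p), s p)` and an output with likelihoods `a, b`,
the right-hand side is `P(out) (P(1 | out) - p)²`. -/
lemma mul_sq_mul_sq_sub_div_le {s p a b : ℝ} (hs : 0 ≤ s) (hp0 : 0 ≤ p) (hp1 : p ≤ 1)
    (ha : 0 ≤ a) (hb : 0 ≤ b) :
    s * (p * (1 - p)) ^ 2 * ((b - a) ^ 2 / (a + b))
      ≤ (s * (1 - p) * a + s * p * b) * (s * p * b / (s * (1 - p) * a + s * p * b) - p) ^ 2 := by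
  set L := s * (1 - p) * a + s * p * b
  set N := s * p * (1 - p) * (b - a)
  have hL : 0 ≤ L := by positivity
  have hLle : L ≤ s * (a + b) := by nlinarith [mul_nonneg hs ha, mul_nonneg hs hb]
  have hlhs : s * (p * (1 - p)) ^ 2 * ((b - a) ^ 2 / (a + b)) = N ^ 2 / (s * (a + b)) := by
    rcases hs.eq_or_lt with rfl | hs
    · simp
    field_simp
    ring
  have hrhs : L * (s * p * b / L - p) ^ 2 = N ^ 2 / L := by
    rcases hL.eq_or_lt with hL0 | hL
    · rw [← hL0]; simp
    field_simp
    ring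
  rw [hlhs, hrhs]
  rcases hL.eq_or_lt with hL0 | hL
  · have hN : N = 0 := by
      rcases hs.eq_or_lt with rfl | hs
      · simp [N]
      have hD : (1 - p) * a + p * b = 0 := by
        have : s * ((1 - p) * a + p * b) = 0 := by rw [hL0]; ring
        exact (mul_eq_zero.1 this).resolve_left hs.ne'
      obtain ⟨h1, h2⟩ := (add_eq_zero_iff_of_nonneg (mul_nonneg (sub_nonneg.2 hp1) ha)
        (mul_nonneg hp0 hb)).1 hD
      show s * p * (1 - p) * (b - a) = 0
      linear_combination s * (1 - p) * h2 - s * p * h1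
    rw [hN, ← hL0]; simp
  exact div_le_div_of_nonneg_left (sq_nonneg N) hL hLle

-- A bit `X` and an output `Y` are encoded by their joint weights `m x y = P(X = x, Y = y)`.

section JointWeights

variable {β : Type*}

noncomputable def marg (m : ZMod 2 → β → ℝ) (y : β) : ℝ := m 0 y + m 1 y

/-- `P(X = 1 | Y = y)`, with the junk value `0` when `P(Y = y) = 0`. -/
noncomputable def post (m : ZMod 2 → β → ℝ) (y : β) : ℝ := m 1 y / marg m y

noncomputable def binCondEnt [Fintype β] (m : ZMod 2 → β → ℝ) : ℝ :=
  ∑ y, marg m y * binEnt (post m y)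

noncomputable def triangDiscr [Fintype β] (m : ZMod 2 → β → ℝ) : ℝ :=
  ∑ y, (m 1 y - m 0 y) ^ 2 / marg m y

variable {m : ZMod 2 → β → ℝ}

lemma marg_nonneg (hm : ∀ x y, 0 ≤ m x y) (y : β) : 0 ≤ marg m y :=
  add_nonneg (hm 0 y) (hm 1 y)

lemma post_nonneg (hm : ∀ x y, 0 ≤ m x y) (y : β) : 0 ≤ post m y :=
  div_nonneg (hm 1 y) (marg_nonneg hm y)

lemma post_le_one (hm : ∀ x y, 0 ≤ m x y) (y : β) : post m y ≤ 1 :=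
  div_le_one_of_le₀ (le_add_of_nonneg_left (hm 0 y)) (marg_nonneg hm y)

lemma eq_zero_of_marg_eq_zero (hm : ∀ x y, 0 ≤ m x y) {y : β} (h : marg m y = 0) :
    m 0 y = 0 ∧ m 1 y = 0 :=
  (add_eq_zero_iff_of_nonneg (hm 0 y) (hm 1 y)).1 h

lemma marg_mul_post (hm : ∀ x y, 0 ≤ m x y) (y : β) : marg m y * post m y = m 1 y := by
  rcases (marg_nonneg hm y).eq_or_lt with h | h
  · rw [← h, (eq_zero_of_marg_eq_zero hm h.symm).2, zero_mul]
  exact mul_div_cancel₀ _ h.ne'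

lemma marg_mul_one_sub_post (hm : ∀ x y, 0 ≤ m x y) (y : β) :
    marg m y * (1 - post m y) = m 0 y := by
  rw [mul_one_sub, marg_mul_post hm, marg, add_sub_cancel_right]

lemma sum_marg_eq_one [Fintype β] (hm1 : ∀ x, ∑ y, m x y = 2⁻¹) : ∑ y, marg m y = 1 := by
  simp only [marg, Finset.sum_add_distrib, hm1]
  norm_num

lemma binCondEnt_nonneg [Fintype β] (hm : ∀ x y, 0 ≤ m x y) : 0 ≤ binCondEnt m :=
  Finset.sum_nonneg fun y _ =>
    mul_nonneg (marg_nonneg hm y) (binEnt_nonneg (post_nonneg hm y) (post_le_one hm y))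

lemma binCondEnt_le_one [Fintype β] (hm : ∀ x y, 0 ≤ m x y) (hm1 : ∑ y, marg m y = 1) :
    binCondEnt m ≤ 1 :=
  calc binCondEnt m ≤ ∑ y, marg m y * 1 :=
        Finset.sum_le_sum fun y _ =>
          mul_le_mul_of_nonneg_left (binEnt_le_one _) (marg_nonneg hm y)
    _ = 1 := by simp [hm1]

lemma marg_mul_one_sub_two_mul_post_sq (hm : ∀ x y, 0 ≤ m x y) (y : β) :
    marg m y * (1 - 2 * post m y) ^ 2 = (m 1 y - m 0 y) ^ 2 / marg m y := by
  rcases (marg_nonneg hm y).eq_or_lt with h | h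
  · simp [← h, eq_zero_of_marg_eq_zero hm h.symm]
  rw [post]
  field_simp
  simp only [marg]
  ring

lemma log_two_mul_one_sub_binCondEnt_le [Fintype β] (hm : ∀ x y, 0 ≤ m x y)
    (hm1 : ∑ y, marg m y = 1) :
    log 2 * (1 - binCondEnt m) ≤ triangDiscr m := by
  calc log 2 * (1 - binCondEnt m) = ∑ y, marg m y * (log 2 - binEntropy (post m y)) := by
        simp only [binCondEnt, binEnt_eq_binEntropy_div, mul_sub, Finset.sum_sub_distrib,
          ← Finset.sum_mul, hm1, Finset.mul_sum]
        field_simp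
    _ ≤ ∑ y, marg m y * (1 - 2 * post m y) ^ 2 :=
        Finset.sum_le_sum fun y _ => mul_le_mul_of_nonneg_left
          (log_two_sub_binEntropy_le (post_nonneg hm y) (post_le_one hm y)) (marg_nonneg hm y)
    _ = triangDiscr m := Finset.sum_congr rfl fun y _ => marg_mul_one_sub_two_mul_post_sq hm y

lemma binCondEnt_pow_eight_le [Fintype β] (hm : ∀ x y, 0 ≤ m x y) (hm1 : ∑ y, marg m y = 1) :
    log 2 ^ 8 * binCondEnt m ^ 8 / 6561 ≤ ∑ y, marg m y * (post m y * (1 - post m y)) ^ 2 := by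
  have hJensen : binCondEnt m ^ 8 ≤ ∑ y, marg m y * binEnt (post m y) ^ 8 :=
    pow_arith_mean_le_arith_mean_pow _ _ _ (fun y _ => marg_nonneg hm y) hm1
      (fun y _ => binEnt_nonneg (post_nonneg hm y) (post_le_one hm y)) 8
  have hterm : ∀ y,
      log 2 ^ 8 * binEnt (post m y) ^ 8 / 6561 ≤ (post m y * (1 - post m y)) ^ 2 := by
    intro y
    have h4 := binEntropy_pow_four_le (post_nonneg hm y) (post_le_one hm y)
    have h8 := pow_le_pow_left₀ (by positivity) h4 2
    rw [binEnt_eq_binEntropy_div, div_pow]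
    field_simp
    nlinarith [h8]
  calc log 2 ^ 8 * binCondEnt m ^ 8 / 6561
      ≤ log 2 ^ 8 * (∑ y, marg m y * binEnt (post m y) ^ 8) / 6561 := by gcongr
    _ = ∑ y, marg m y * (log 2 ^ 8 * binEnt (post m y) ^ 8 / 6561) := by
        rw [Finset.mul_sum, Finset.sum_div]
        exact Finset.sum_congr rfl fun y _ => by ring
    _ ≤ ∑ y, marg m y * (post m y * (1 - post m y)) ^ 2 :=
        Finset.sum_le_sum fun y _ => mul_le_mul_of_nonneg_left (hterm y) (marg_nonneg hm y)

end JointWeights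

/-- `V` is a channel and `u` the law of its input bit, scaled by `s`. -/
lemma mul_triangDiscr_le_binEnt_sub_binCondEnt {δ : Type*} [Fintype δ] (V : ZMod 2 → δ → ℝ)
    (hV0 : ∀ x z, 0 ≤ V x z) (hV1 : ∀ x, ∑ z, V x z = 1) (u : ZMod 2 → ℝ) {s p : ℝ}
    (hs : 0 ≤ s) (hp0 : 0 ≤ p) (hp1 : p ≤ 1) (hu0 : u 0 = s * (1 - p)) (hu1 : u 1 = s * p) :
    s * (p * (1 - p)) ^ 2 * triangDiscr V / log 2
      ≤ s * binEnt p - binCondEnt (fun x z => u x * V x z) := by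
  set M : ZMod 2 → δ → ℝ := fun x z => u x * V x z
  have hu : ∀ x, 0 ≤ u x := by
    intro x
    fin_cases x
    · exact hu0 ▸ mul_nonneg hs (sub_nonneg.2 hp1)
    · exact hu1 ▸ mul_nonneg hs hp0
  have hM : ∀ x z, 0 ≤ M x z := fun x z => mul_nonneg (hu x) (hV0 x z)
  have hmargM : ∀ z, marg M z = s * (1 - p) * V 0 z + s * p * V 1 z := by
    intro z; simp only [marg, M, hu0, hu1]
  have hsum : ∑ z, marg M z = s := by
    simp only [hmargM, Finset.sum_add_distrib, ← Finset.mul_sum, hV1]; ring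
  have hmean : ∑ z, marg M z * post M z = p * ∑ z, marg M z := by
    simp only [marg_mul_post hM, M, ← Finset.mul_sum, hV1, hu1, hsum]; ring
  have hJensen := sum_mul_binEntropy_add_sq_le Finset.univ (marg M) (post M)
    (fun z _ => marg_nonneg hM z) (fun z _ => post_nonneg hM z) (fun z _ => post_le_one hM z)
    hp0 hp1 hmean
  have hquad : s * (p * (1 - p)) ^ 2 * triangDiscr V ≤ ∑ z, marg M z * (post M z - p) ^ 2 := by
    rw [triangDiscr, Finset.mul_sum]
    refine Finset.sum_le_sum fun z _ => ?_
    have := mul_sq_mul_sq_sub_div_le hs hp0 hp1 (hV0 0 z) (hV0 1 z)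
    simpa only [marg, post, M, hu0, hu1, mul_assoc] using this
  simp only [mul_add, Finset.sum_add_distrib, hsum] at hJensen
  rw [binCondEnt, binEnt_eq_binEntropy_div]
  simp only [binEnt_eq_binEntropy_div, mul_div_assoc', ← Finset.sum_div, ← sub_div]
  exact div_le_div_of_nonneg_right (by linarith) (log_pos one_lt_two).le

lemma sum_zmod_two {M : Type*} [AddCommMonoid M] (f : ZMod 2 → M) :
    ∑ x, f x = f 0 + f 1 :=
  Fin.sum_univ_two f

section Plus

variable {γ : Type*} [Fintype γ]

/-- If `m` is the joint law of `(X, Y)`, then `plusJoint m` is the joint law of `X₂` and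
`(Y₁, Y₂, X₁)`, where `X₁, X₂` are independent copies of `X` and `Y₁, Y₂` the outputs of the
channel `X ↦ Y` on the inputs `X₁ + X₂` and `X₂`. -/
def plusJoint (m : ZMod 2 → γ → ℝ) : ZMod 2 → γ × γ × ZMod 2 → ℝ :=
  fun x z => m x z.2.1 * m (z.2.2 + x) z.1

lemma binCondEnt_plusJoint (m : ZMod 2 → γ → ℝ) :
    binCondEnt (plusJoint m)
      = ∑ y, binCondEnt (fun x (z : γ × ZMod 2) => m x y * m (z.2 + x) z.1) := by
  simp only [binCondEnt, Fintype.sum_prod_type]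
  exact Finset.sum_comm

lemma triangDiscr_shift (m : ZMod 2 → γ → ℝ) :
    triangDiscr (fun x (z : γ × ZMod 2) => m (z.2 + x) z.1) = 2 * triangDiscr m := by
  have h11 : (1 : ZMod 2) + 1 = 0 := by decide
  simp only [triangDiscr, marg, Fintype.sum_prod_type, Finset.mul_sum]
  refine Finset.sum_congr rfl fun y _ => ?_
  rw [sum_zmod_two, zero_add, zero_add, add_zero, h11]
  ring

theorem binCondEnt_sub_binCondEnt_plusJoint_ge {m : ZMod 2 → γ → ℝ} (hm0 : ∀ x y, 0 ≤ m x y)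
    (hm1 : ∀ x, ∑ y, m x y = 2⁻¹) :
    2 * log 2 ^ 8 * ((1 - binCondEnt m) * binCondEnt m ^ 8) / 6561
      ≤ binCondEnt m - binCondEnt (plusJoint m) := by
  have hlog : 0 < log 2 := log_pos one_lt_two
  have hmarg := sum_marg_eq_one hm1
  set V : ZMod 2 → γ × ZMod 2 → ℝ := fun x z => m (z.2 + x) z.1
  have hV1 : ∀ x, ∑ z, V x z = 1 := by
    intro x
    simp only [V, Fintype.sum_prod_type]
    rw [Finset.sum_comm]
    simp only [hm1, Finset.sum_const, Finset.card_univ, ZMod.card]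
    norm_num
  have hstep : ∀ y, marg m y * (post m y * (1 - post m y)) ^ 2 * triangDiscr V / log 2
      ≤ marg m y * binEnt (post m y) - binCondEnt (fun x z => m x y * V x z) :=
    fun y => mul_triangDiscr_le_binEnt_sub_binCondEnt V (fun x z => hm0 _ _) hV1
      (fun x => m x y) (marg_nonneg hm0 y) (post_nonneg hm0 y) (post_le_one hm0 y)
      (marg_mul_one_sub_post hm0 y).symm (marg_mul_post hm0 y).symm
  have hgap : (∑ y, marg m y * (post m y * (1 - post m y)) ^ 2) * (2 * triangDiscr m) / log 2
      ≤ binCondEnt m - binCondEnt (plusJoint m) := by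
    rw [binCondEnt_plusJoint, binCondEnt, ← Finset.sum_sub_distrib, Finset.sum_mul,
      Finset.sum_div, ← triangDiscr_shift]
    exact Finset.sum_le_sum fun y _ => hstep y
  have hRP := log_two_mul_one_sub_binCondEnt_le hm0 hmarg
  have hP8 := binCondEnt_pow_eight_le hm0 hmarg
  have hH1 := binCondEnt_le_one hm0 hmarg
  refine le_trans ?_ hgap
  rw [le_div_iff₀ hlog]
  calc 2 * log 2 ^ 8 * ((1 - binCondEnt m) * binCondEnt m ^ 8) / 6561 * log 2
      = (log 2 ^ 8 * binCondEnt m ^ 8 / 6561) * (2 * (log 2 * (1 - binCondEnt m))) := by ring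
    _ ≤ (∑ y, marg m y * (post m y * (1 - post m y)) ^ 2) * (2 * triangDiscr m) := by
        refine mul_le_mul hP8 (by linarith) (by nlinarith) ?_
        exact Finset.sum_nonneg fun y _ => mul_nonneg (marg_nonneg hm0 y) (sq_nonneg _)

end Plus

section Law

variable {Ω ι β : Type*} [MeasurableSpace Ω] {μ : Measure Ω} [Fintype ι]

/-- No measurability is assumed: additivity over the fibres of `Φ` follows from
subadditivity once their masses add up to `1`. -/
lemma toReal_measure_preimage_finset [IsProbabilityMeasure μ] (Φ : Ω → ι)
    (hΦ : ∑ i, (μ (Φ ⁻¹' {i})).toReal = 1) (S : Finset ι) :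
    (μ (Φ ⁻¹' S)).toReal = ∑ i ∈ S, (μ (Φ ⁻¹' {i})).toReal := by
  have hle : ∀ T : Finset ι, (μ (Φ ⁻¹' T)).toReal ≤ ∑ i ∈ T, (μ (Φ ⁻¹' {i})).toReal := by
    intro T
    rw [← ENNReal.toReal_sum fun i _ => measure_ne_top μ _]
    refine ENNReal.toReal_mono (ENNReal.sum_ne_top.2 fun i _ => measure_ne_top μ _) ?_
    rw [show Φ ⁻¹' T = ⋃ i ∈ T, Φ ⁻¹' {i} by ext; simp]
    exact measure_biUnion_finset_le T _
  have hcover : 1 ≤ (μ (Φ ⁻¹' S)).toReal + (μ (Φ ⁻¹' ↑Sᶜ)).toReal := by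
    have h := measure_union_le (μ := μ) (Φ ⁻¹' S) (Φ ⁻¹' ↑Sᶜ)
    rw [← Set.preimage_union, Finset.coe_compl, Set.union_compl_self, Set.preimage_univ,
      measure_univ] at h
    rw [Finset.coe_compl, ← ENNReal.toReal_add (measure_ne_top μ _) (measure_ne_top μ _)]
    exact (ENNReal.toReal_le_toReal ENNReal.one_ne_top
      (ENNReal.add_ne_top.2 ⟨measure_ne_top μ _, measure_ne_top μ _⟩)).2 h
  have hsplit := Finset.sum_add_sum_compl S fun i => (μ (Φ ⁻¹' {i})).toReal
  linarith [hle S, hle Sᶜ]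

lemma toReal_measure_comp_preimage [IsProbabilityMeasure μ] {κ : Type*} (Φ : Ω → ι)
    (hΦ : ∑ i, (μ (Φ ⁻¹' {i})).toReal = 1) (h : ι → κ) (k : κ) :
    (μ ((h ∘ Φ) ⁻¹' {k})).toReal = ∑ i with h i = k, (μ (Φ ⁻¹' {i})).toReal := by
  rw [← toReal_measure_preimage_finset Φ hΦ]
  congr 2
  ext ω
  simp

lemma negMulLog_add_negMulLog_sub_negMulLog_add {u v : ℝ} (hu : 0 ≤ u) (hv : 0 ≤ v) :
    negMulLog u + negMulLog v - negMulLog (u + v) = (u + v) * binEntropy (v / (u + v)) := by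
  rcases (add_nonneg hu hv).eq_or_lt with h | h
  · obtain ⟨rfl, rfl⟩ : u = 0 ∧ v = 0 := ⟨by linarith, by linarith⟩
    simp
  have hu' : u = (u + v) * (u / (u + v)) := (mul_div_cancel₀ _ h.ne').symm
  have hv' : v = (u + v) * (v / (u + v)) := (mul_div_cancel₀ _ h.ne').symm
  have hsub : 1 - v / (u + v) = u / (u + v) := by field_simp; ring
  rw [binEntropy_eq_negMulLog_add_negMulLog_one_sub, hsub]
  conv_lhs => rw [hu', hv', negMulLog_mul, negMulLog_mul]
  field_simp
  ring

lemma cEnt_eq_binCondEnt [Fintype β] (X : Ω → ZMod 2) (Y : Ω → β) (m : ZMod 2 → β → ℝ)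
    (hm : ∀ x y, 0 ≤ m x y)
    (hjoint : ∀ x y, (μ ((fun ω => (X ω, Y ω)) ⁻¹' {(x, y)})).toReal = m x y)
    (hY : ∀ y, (μ (Y ⁻¹' {y})).toReal = marg m y) :
    cEnt μ X Y = binCondEnt m := by
  simp only [cEnt, shEnt, Fintype.sum_prod_type, sum_zmod_two, hjoint, hY, ← sub_div,
    ← Finset.sum_add_distrib, ← Finset.sum_sub_distrib, binCondEnt, binEnt_eq_binEntropy_div,
    Finset.sum_div]
  refine Finset.sum_congr rfl fun y _ => ?_
  simp only [post, marg]
  rw [negMulLog_add_negMulLog_sub_negMulLog_add (hm 0 y) (hm 1 y), mul_div_assoc]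

lemma cEnt_comp_eq_binCondEnt [IsProbabilityMeasure μ] [Fintype β] (Φ : Ω → ι)
    (hΦ : ∑ i, (μ (Φ ⁻¹' {i})).toReal = 1) (f : ι → ZMod 2) (g : ι → β) (m : ZMod 2 → β → ℝ)
    (hm : ∀ x y, ∑ i with g i = y ∧ f i = x, (μ (Φ ⁻¹' {i})).toReal = m x y) :
    cEnt μ (f ∘ Φ) (g ∘ Φ) = binCondEnt m := by
  refine cEnt_eq_binCondEnt _ _ m (fun x y => ?_) (fun x y => ?_) (fun y => ?_)
  · rw [← hm]
    exact Finset.sum_nonneg fun i _ => ENNReal.toReal_nonneg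
  · rw [← hm]
    refine (toReal_measure_comp_preimage Φ hΦ (fun i => (f i, g i)) (x, y)).trans ?_
    simp only [Prod.mk.injEq, and_comm]
  · rw [toReal_measure_comp_preimage Φ hΦ, ← Finset.sum_fiberwise _ f, sum_zmod_two, marg,
      ← hm, ← hm]
    simp only [Finset.filter_filter]

end Law

lemma mem_Icc_union_Icc_of_one_sub_mul_pow_le {t a : ℝ} (ha : 0 < a) (ht0 : 0 ≤ t)
    (ht1 : t ≤ 1) (h : (1 - t) * t ^ 8 ≤ a ^ 9) : t ∈ Set.Icc 0 a ∪ Set.Icc (1 - a) 1 := by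
  by_contra hout
  simp only [Set.mem_union, Set.mem_Icc, not_or, not_and, not_le] at hout
  have hat : a < t := hout.1 ht0
  have hta : a < 1 - t := by
    by_contra h'
    linarith [hout.2 (by linarith)]
  have h8 : a ^ 8 < t ^ 8 := pow_lt_pow_left₀ hat ha.le (by norm_num)
  nlinarith [pow_pos ha 8]

lemma cEnt_eq_binCondEnt_of_law {γ Ω : Type*} [Fintype γ] [MeasurableSpace Ω] {μ : Measure Ω}
    [IsProbabilityMeasure μ] {Q : ZMod 2 → γ → ℝ} (hQ1 : ∀ x, ∑ y, Q x y = 1)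
    {A1 A2 : Ω → ZMod 2} {B1 B2 : Ω → γ}
    (hP : ∀ a1 a2 b1 b2, (μ {ω | A1 ω = a1 ∧ A2 ω = a2 ∧ B1 ω = b1 ∧ B2 ω = b2}).toReal
      = 1 / 4 * Q (a1 + a2) b1 * Q a2 b2) :
    cEnt μ A2 B2 = binCondEnt (fun x y => Q x y / 2) ∧
      cEnt μ A2 (fun ω => (B1 ω, B2 ω, A1 ω)) = binCondEnt (plusJoint fun x y => Q x y / 2) := by
  set Φ : Ω → ZMod 2 × ZMod 2 × γ × γ := fun ω => (A1 ω, A2 ω, B1 ω, B2 ω)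
  have hatom : ∀ i, (μ (Φ ⁻¹' {i})).toReal
      = 1 / 4 * Q (i.1 + i.2.1) i.2.2.1 * Q i.2.1 i.2.2.2 := by
    rintro ⟨a1, a2, b1, b2⟩
    rw [← hP]
    congr 2
    ext ω
    simp [Φ]
  have hΦ : ∑ i, (μ (Φ ⁻¹' {i})).toReal = 1 := by
    simp [hatom, Fintype.sum_prod_type, ← Finset.mul_sum, hQ1]
    norm_num
  constructor
  · refine cEnt_comp_eq_binCondEnt Φ hΦ (fun i => i.2.1) (fun i => i.2.2.2) _ fun x y => ?_
    simp [hatom, Finset.sum_filter, Fintype.sum_prod_type, ite_and, ← Finset.sum_mul,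
      ← Finset.mul_sum, hQ1]
    ring
  · refine cEnt_comp_eq_binCondEnt Φ hΦ (fun i => i.2.1) (fun i => (i.2.2.1, i.2.2.2, i.1)) _
      fun x ⟨b1, b2, a1⟩ => ?_
    simp [hatom, Finset.sum_filter, Fintype.sum_prod_type, ite_and, plusJoint]
    ring

end Arikan

open Arikan

/-- Arıkan's extremality lemma: if
`P(A₁=a₁, A₂=a₂, B₁=b₁, B₂=b₂) = (1/4) Q(b₁ | a₁+a₂) Q(b₂ | a₂)` for a conditional
probability kernel `Q`, then for every `a > 0` there is `b > 0` (uniform over `Q` and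
the underlying spaces) such that `H(A₂|B₂) − H(A₂ | B₁, B₂, A₁) ≤ b` implies
`H(A₂|B₂) ∈ [0, a] ∪ [1−a, 1]`. -/
theorem statement16 (a : ℝ) (ha : 0 < a) :
    ∃ b : ℝ, 0 < b ∧
      ∀ (γ : Type) (_ : Fintype γ) (Ω : Type) (_ : MeasurableSpace Ω)
        (μ : Measure Ω), IsProbabilityMeasure μ →
      ∀ Q : ZMod 2 → γ → ℝ, (∀ x y, 0 ≤ Q x y) → (∀ x, ∑ y : γ, Q x y = 1) →
      ∀ (A1 A2 : Ω → ZMod 2) (B1 B2 : Ω → γ),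
        (∀ (a1 a2 : ZMod 2) (b1 b2 : γ),
          (μ {ω | A1 ω = a1 ∧ A2 ω = a2 ∧ B1 ω = b1 ∧ B2 ω = b2}).toReal
            = 1 / 4 * Q (a1 + a2) b1 * Q a2 b2) →
        cEnt μ A2 B2 - cEnt μ A2 (fun ω => (B1 ω, B2 ω, A1 ω)) ≤ b →
        cEnt μ A2 B2 ∈ Set.Icc 0 a ∪ Set.Icc (1 - a) 1 := by
  refine ⟨2 * log 2 ^ 8 * a ^ 9 / 6561, by positivity, ?_⟩
  intro γ _ Ω _ μ _ Q hQ0 hQ1 A1 A2 B1 B2 hP hgap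
  obtain ⟨hH, hHplus⟩ := cEnt_eq_binCondEnt_of_law hQ1 hP
  set m : ZMod 2 → γ → ℝ := fun x y => Q x y / 2
  have hm0 : ∀ x y, 0 ≤ m x y := fun x y => div_nonneg (hQ0 x y) zero_le_two
  have hm1 : ∀ x, ∑ y, m x y = 2⁻¹ := fun x => by simp [m, ← Finset.sum_div, hQ1]
  rw [hH, hHplus] at hgap
  rw [hH]
  refine mem_Icc_union_Icc_of_one_sub_mul_pow_le ha (binCondEnt_nonneg hm0)
    (binCondEnt_le_one hm0 (sum_marg_eq_one hm1)) ?_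
  have hdrop := (binCondEnt_sub_binCondEnt_plusJoint_ge hm0 hm1).trans hgap
  rwa [div_le_div_iff_of_pos_right (by norm_num),
    mul_le_mul_iff_right₀ (by positivity)] at hdrop
end

section
/- Let n = 2^k be a power of two, let X = (X_1,…,X_n) and Z = (Z_1,…,Z_n) be independent random vectors over F_2, each with i.i.d. coordinates, and set X' = X ⊕ Z (coordinatewise addition over F_2). Let Y = X·G_n, Y' = X'·G_n, and W = Z·G_n. Then for every j ∈ {1,…,n}, H(Y'_j | Y'_1,…,Y'_{j-1}) ≥ H(Y_j | Y_1,…,Y_{j-1}). -/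
open MeasureTheory ProbabilityTheory Filter
open scoped Classical

/-!
Write `W = Z·G_n`, so that `Y' = Y + W` with `W` a function of `Z`, and `Z` is independent of `X`
(hence of `Y`). Then
`H(Y_j | Y^{j-1}) = H(Y_j | Y^{j-1}, Z) = H(Y_j + W_j | Y^{j-1} + W^{j-1}, Z) ≤ H(Y'_j | Y'^{j-1})`:
the first step is independence, the second holds because, for fixed `z`, adding `(w_j, w^{j-1})`
is a bijection, and the last is "conditioning reduces entropy", i.e. the submodularity
`H(A, B, C) + H(B) ≤ H(A, B) + H(B, C)`.
-/

open Real

lemma injective_add_comp_snd {δ ε : Type*} [Add δ] [IsRightCancelAdd δ] (h : ε → δ) :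
    (fun p : δ × ε => (p.1 + h p.2, p.2)).Injective := by
  rintro ⟨x, e⟩ ⟨x', e'⟩ hxe
  simp only [Prod.mk.injEq] at hxe
  obtain ⟨hx, rfl⟩ := hxe
  rw [add_right_cancel hx]

lemma negMulLog_le_sub_sub_mul_log {p q : ℝ} (hp : 0 ≤ p) (hq : 0 ≤ q) (hpq : 0 < p → 0 < q) :
    negMulLog p ≤ q - p - p * log q := by
  rcases hp.eq_or_lt with rfl | hp
  · simpa using hq
  have hq := hpq hp
  have hlog := mul_le_mul_of_nonneg_left (log_le_sub_one_of_pos (div_pos hq hp)) hp.le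
  rw [log_div hq.ne' hp.ne', mul_sub, mul_sub, mul_div_cancel₀ _ hp.ne', mul_one] at hlog
  rw [negMulLog, neg_mul]
  linarith

lemma mul_log_mul_div_eq {p r s S : ℝ} (hp : 0 ≤ p) (hr : p ≤ r) (hs : p ≤ s) (hS : r ≤ S) :
    p * log (r * s / S) = p * log r + p * log s - p * log S := by
  rcases hp.eq_or_lt with rfl | hp
  · simp
  rw [log_div (mul_pos (by linarith) (by linarith)).ne' (by linarith),
    log_mul (by linarith) (by linarith)]
  ring

/-- Subadditivity of entropy, `H(A, C) ≤ H(A) + H(C)`, for an unnormalized joint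
distribution `p`. -/
lemma sum_negMulLog_add_negMulLog_sum_le {α γ : Type*} [Fintype α] [Fintype γ]
    (p : α → γ → ℝ) (hp : ∀ a c, 0 ≤ p a c) :
    ∑ a, ∑ c, negMulLog (p a c) + negMulLog (∑ a, ∑ c, p a c)
      ≤ ∑ a, negMulLog (∑ c, p a c) + ∑ c, negMulLog (∑ a, p a c) := by
  set r := fun a => ∑ c, p a c
  set s := fun c => ∑ a, p a c
  set S := ∑ a, ∑ c, p a c
  have hpr : ∀ a c, p a c ≤ r a := fun a c => Finset.single_le_sum (fun c _ => hp a c) (by simp)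
  have hps : ∀ a c, p a c ≤ s c := fun a c => Finset.single_le_sum (fun a _ => hp a c) (by simp)
  have hrS : ∀ a, r a ≤ S := fun a =>
    Finset.single_le_sum (fun a _ => Finset.sum_nonneg fun c _ => hp a c) (by simp)
  have hsS : ∑ c, s c = S := Finset.sum_comm
  -- Gibbs' inequality against the product `r a * s c / S` of the marginals.
  have gibbs : ∑ a, ∑ c, negMulLog (p a c) ≤ ∑ a, ∑ c,
      (r a * s c / S - p a c - (p a c * log (r a) + p a c * log (s c) - p a c * log S)) := by
    gcongr with a _ c _
    have hr0 := (hp a c).trans (hpr a c)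
    rw [← mul_log_mul_div_eq (hp a c) (hpr a c) (hps a c) (hrS a)]
    refine negMulLog_le_sub_sub_mul_log (hp a c)
      (div_nonneg (mul_nonneg hr0 ((hp a c).trans (hps a c))) (hr0.trans (hrS a))) fun h => ?_
    have hr := h.trans_le (hpr a c)
    have hs := h.trans_le (hps a c)
    have hS := hr.trans_le (hrS a)
    positivity
  have marginals : ∑ a, ∑ c,
      (r a * s c / S - p a c - (p a c * log (r a) + p a c * log (s c) - p a c * log S))
      = S * S / S - S + ∑ a, negMulLog (r a) + ∑ c, negMulLog (s c) - negMulLog S := by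
    simp only [Finset.sum_sub_distrib, Finset.sum_add_distrib, ← Finset.sum_div,
      ← Finset.sum_mul_sum, ← Finset.sum_mul, hsS]
    rw [Finset.sum_comm (f := fun a c => p a c * log (s c))]
    simp only [← Finset.sum_mul, negMulLog, neg_mul, Finset.sum_neg_distrib]
    ring
  rw [marginals, mul_self_div_self, sub_self, zero_add] at gibbs
  linarith

section Entropy

variable {Ω : Type*} [MeasurableSpace Ω] {μ : Measure Ω} {α β γ : Type*}
  [Fintype α] [Fintype β] [Fintype γ]

lemma shEnt_eq (X : Ω → α) : shEnt μ X = (∑ x, negMulLog (μ.real (X ⁻¹' {x}))) / log 2 := rfl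

lemma shEnt_prod (A : Ω → α) (B : Ω → β) :
    shEnt μ (fun ω => (A ω, B ω))
      = (∑ a, ∑ b, negMulLog (μ.real (A ⁻¹' {a} ∩ B ⁻¹' {b}))) / log 2 := by
  simp only [shEnt_eq, Fintype.sum_prod_type, ← Set.singleton_prod_singleton, Set.mk_preimage_prod]

lemma shEnt_comp_of_injective {f : α → β} (hf : f.Injective) (X : Ω → α) :
    shEnt μ (fun ω => f (X ω)) = shEnt μ X := by
  simp only [shEnt_eq]
  congr 1
  refine (Fintype.sum_of_injective f hf _ _ (fun b hb => ?_) fun a => ?_).symm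
  · convert negMulLog_zero
    convert measureReal_empty (μ := μ)
    ext ω
    simpa using fun h => hb ⟨X ω, h⟩
  · congr 3
    ext ω
    simp [hf.eq_iff]

variable [MeasurableSpace α] [MeasurableSingletonClass α]
  [MeasurableSpace β] [MeasurableSingletonClass β]
  [MeasurableSpace γ] [MeasurableSingletonClass γ]

lemma measureReal_eq_sum_inter_preimage [IsFiniteMeasure μ] (s : Set Ω)
    {C : Ω → γ} (hC : Measurable C) : μ.real s = ∑ c, μ.real (s ∩ C ⁻¹' {c}) := by
  have h := sum_measureReal_preimage_singleton (μ := μ.restrict s) Finset.univ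
    (fun c _ => hC (measurableSet_singleton c))
  simp only [Finset.coe_univ, Set.preimage_univ, measureReal_restrict_apply_univ,
    measureReal_restrict_apply (hC (measurableSet_singleton _))] at h
  simp only [← h, Set.inter_comm s]

lemma sum_measureReal_preimage_singleton_eq_one [IsProbabilityMeasure μ] {C : Ω → γ}
    (hC : Measurable C) : ∑ c, μ.real (C ⁻¹' {c}) = 1 := by
  simpa using (measureReal_eq_sum_inter_preimage (μ := μ) Set.univ hC).symm

lemma shEnt_prod_of_indepFun [IsProbabilityMeasure μ] {A : Ω → α} {B : Ω → β}
    (hA : Measurable A) (hB : Measurable B) (h : IndepFun A B μ) :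
    shEnt μ (fun ω => (A ω, B ω)) = shEnt μ A + shEnt μ B := by
  have hmul : ∀ a b, μ.real (A ⁻¹' {a} ∩ B ⁻¹' {b}) = μ.real (A ⁻¹' {a}) * μ.real (B ⁻¹' {b}) :=
    fun a b => by
      simp only [measureReal_def, ← ENNReal.toReal_mul, h.measure_inter_preimage_eq_mul _ _
        (measurableSet_singleton a) (measurableSet_singleton b)]
  rw [shEnt_prod, shEnt_eq, shEnt_eq, ← add_div]
  simp only [hmul, negMulLog_mul, Finset.sum_add_distrib, ← Finset.sum_mul, ← Finset.mul_sum,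
    sum_measureReal_preimage_singleton_eq_one hA, sum_measureReal_preimage_singleton_eq_one hB,
    one_mul]

end Entropy

section ConditionalEntropy

variable {Ω : Type*} [MeasurableSpace Ω] {μ : Measure Ω} {α β γ : Type*}
  [Fintype α] [Fintype β] [Fintype γ]

lemma cEnt_prod_le [IsFiniteMeasure μ] [MeasurableSpace α] [MeasurableSingletonClass α]
    [MeasurableSpace γ] [MeasurableSingletonClass γ] {A : Ω → α} (B : Ω → β) {C : Ω → γ}
    (hA : Measurable A) (hC : Measurable C) :
    cEnt μ A (fun ω => (B ω, C ω)) ≤ cEnt μ A B := by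
  set q : β → α → γ → ℝ := fun b a c => μ.real (B ⁻¹' {b} ∩ A ⁻¹' {a} ∩ C ⁻¹' {c})
  have hABC : shEnt μ (fun ω => (A ω, (B ω, C ω)))
      = (∑ b, ∑ a, ∑ c, negMulLog (q b a c)) / log 2 := by
    simp only [shEnt_prod, q, Fintype.sum_prod_type, ← Set.singleton_prod_singleton,
      Set.mk_preimage_prod, Set.inter_left_comm (A ⁻¹' _), Set.inter_assoc]
    rw [Finset.sum_comm]
  have hAB : shEnt μ (fun ω => (A ω, B ω)) = (∑ b, ∑ a, negMulLog (∑ c, q b a c)) / log 2 := by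
    rw [shEnt_prod, Finset.sum_comm]
    simp only [q, Set.inter_comm (A ⁻¹' _), ← measureReal_eq_sum_inter_preimage _ hC]
  have hBC : shEnt μ (fun ω => (B ω, C ω)) = (∑ b, ∑ c, negMulLog (∑ a, q b a c)) / log 2 := by
    rw [shEnt_prod]
    simp only [q, Set.inter_right_comm _ (A ⁻¹' _), ← measureReal_eq_sum_inter_preimage _ hA]
  have hB : shEnt μ B = (∑ b, negMulLog (∑ a, ∑ c, q b a c)) / log 2 := by
    simp only [shEnt_eq, q, ← measureReal_eq_sum_inter_preimage _ hA,
      ← measureReal_eq_sum_inter_preimage _ hC]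
  have key := Finset.sum_le_sum fun b (_ : b ∈ Finset.univ) =>
    sum_negMulLog_add_negMulLog_sum_le (q b) fun _ _ => measureReal_nonneg
  simp only [Finset.sum_add_distrib] at key
  rw [cEnt, cEnt, hABC, hAB, hBC, hB, div_sub_div_same, div_sub_div_same]
  gcongr ?_ / _
  linarith

lemma cEnt_prod_eq_of_indepFun [IsProbabilityMeasure μ]
    [MeasurableSpace α] [MeasurableSingletonClass α] [MeasurableSpace β]
    [MeasurableSingletonClass β] [MeasurableSpace γ] [MeasurableSingletonClass γ]
    {A : Ω → α} {B : Ω → β} {C : Ω → γ} (hA : Measurable A) (hB : Measurable B)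
    (hC : Measurable C) (h : IndepFun (fun ω => (A ω, B ω)) C μ) :
    cEnt μ A (fun ω => (B ω, C ω)) = cEnt μ A B := by
  have hABC : shEnt μ (fun ω => (A ω, (B ω, C ω)))
      = shEnt μ (fun ω => (A ω, B ω)) + shEnt μ C := by
    rw [← shEnt_prod_of_indepFun (hA.prodMk hB) hC h]
    exact shEnt_comp_of_injective (Equiv.prodAssoc α β γ).injective
      (fun ω => ((A ω, B ω), C ω))
  have hBC : shEnt μ (fun ω => (B ω, C ω)) = shEnt μ B + shEnt μ C :=
    shEnt_prod_of_indepFun hB hC (h.comp (φ := Prod.snd) (ψ := id) measurable_snd measurable_id)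
  rw [cEnt, cEnt, hABC, hBC]
  ring

lemma cEnt_add_comp_prod [Add α] [IsRightCancelAdd α] [Add β] [IsRightCancelAdd β]
    (A : Ω → α) (B : Ω → β) (C : Ω → γ) (f : γ → α) (g : γ → β) :
    cEnt μ (fun ω => A ω + f (C ω)) (fun ω => (B ω + g (C ω), C ω))
      = cEnt μ A (fun ω => (B ω, C ω)) := by
  have hBC := injective_add_comp_snd g
  have hABC := (injective_add_comp_snd fun bc : β × γ => f bc.2).comp
    (Function.injective_id.prodMap hBC)
  rw [cEnt, cEnt, shEnt_comp_of_injective hBC (fun ω => (B ω, C ω)),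
    ← shEnt_comp_of_injective hABC (fun ω => (A ω, B ω, C ω))]
  rfl

lemma cEnt_le_cEnt_add_of_indepFun [IsProbabilityMeasure μ]
    [MeasurableSpace α] [MeasurableSingletonClass α] [MeasurableSpace β]
    [MeasurableSingletonClass β] [MeasurableSpace γ] [MeasurableSingletonClass γ]
    [Add α] [IsRightCancelAdd α] [Add β] [IsRightCancelAdd β]
    {A : Ω → α} {B : Ω → β} {C : Ω → γ} (hA : Measurable A) (hB : Measurable B)
    (hC : Measurable C) (h : IndepFun (fun ω => (A ω, B ω)) C μ) (f : γ → α) (g : γ → β) :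
    cEnt μ A B ≤ cEnt μ (fun ω => A ω + f (C ω)) (fun ω => B ω + g (C ω)) :=
  calc cEnt μ A B = cEnt μ A (fun ω => (B ω, C ω)) :=
        (cEnt_prod_eq_of_indepFun hA hB hC h).symm
    _ = cEnt μ (fun ω => A ω + f (C ω)) (fun ω => (B ω + g (C ω), C ω)) :=
      (cEnt_add_comp_prod A B C f g).symm
    _ ≤ cEnt μ (fun ω => A ω + f (C ω)) (fun ω => B ω + g (C ω)) :=
      cEnt_prod_le _
        ((Measurable.of_discrete (f := fun p : α × γ => p.1 + f p.2)).comp (hA.prodMk hC)) hC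

end ConditionalEntropy

theorem statement17_general (k : ℕ)
    (Ω : Type) [MeasurableSpace Ω] (μ : Measure Ω) [IsProbabilityMeasure μ]
    (X Z : Ω → Fin (2 ^ k) → ZMod 2) (hX : Measurable X) (hZ : Measurable Z)
    (hindep : IndepFun X Z μ)
    (j : Fin (2 ^ k)) :
    cEnt μ (fun ω => Matrix.vecMul (X ω) (G k) j)
        (fun ω (i : Fin j.val) => Matrix.vecMul (X ω) (G k) (i.castLE j.isLt.le))
      ≤ cEnt μ (fun ω => Matrix.vecMul (fun l => X ω l + Z ω l) (G k) j)
          (fun ω (i : Fin j.val) =>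
            Matrix.vecMul (fun l => X ω l + Z ω l) (G k) (i.castLE j.isLt.le)) := by
  let head : (Fin (2 ^ k) → ZMod 2) → ZMod 2 := fun x => Matrix.vecMul x (G k) j
  let past : (Fin (2 ^ k) → ZMod 2) → Fin j.val → ZMod 2 :=
    fun x i => Matrix.vecMul x (G k) (i.castLE j.isLt.le)
  have key := cEnt_le_cEnt_add_of_indepFun ((Measurable.of_discrete (f := head)).comp hX)
    ((Measurable.of_discrete (f := past)).comp hX) hZ
    (hindep.comp (φ := fun x => (head x, past x)) (ψ := id) Measurable.of_discrete measurable_id)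
    head past
  have hlin : ∀ ω, Matrix.vecMul (fun l => X ω l + Z ω l) (G k)
      = Matrix.vecMul (X ω) (G k) + Matrix.vecMul (Z ω) (G k) := fun ω => Matrix.add_vecMul _ _ _
  simp only [hlin, Pi.add_apply]
  exact key

/-- adding i.i.d. noise increases the polarized conditional entropies:
for `X, Z` independent with i.i.d. coordinates, `X' = X ⊕ Z`, `Y = X ⬝ G_n`,
`Y' = X' ⬝ G_n`, one has `H(Y'_j | Y'^{j-1}) ≥ H(Y_j | Y^{j-1})` for every `j`. -/
theorem statement17 (k : ℕ)
    (Ω : Type) [MeasurableSpace Ω] (μ : Measure Ω) [IsProbabilityMeasure μ]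
    (X Z : Ω → Fin (2 ^ k) → ZMod 2) (hX : Measurable X) (hZ : Measurable Z)
    (hindep : IndepFun X Z μ)
    (νx νz : Measure (ZMod 2)) [IsProbabilityMeasure νx] [IsProbabilityMeasure νz]
    (hiidX : μ.map X = Measure.pi fun _ : Fin (2 ^ k) => νx)
    (hiidZ : μ.map Z = Measure.pi fun _ : Fin (2 ^ k) => νz)
    (j : Fin (2 ^ k)) :
    cEnt μ (fun ω => Matrix.vecMul (X ω) (G k) j)
        (fun ω (i : Fin j.val) => Matrix.vecMul (X ω) (G k) (i.castLE j.isLt.le))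
      ≤ cEnt μ (fun ω => Matrix.vecMul (fun l => X ω l + Z ω l) (G k) j)
          (fun ω (i : Fin j.val) =>
            Matrix.vecMul (fun l => X ω l + Z ω l) (G k) (i.castLE j.isLt.le)) :=
  statement17_general k Ω μ X Z hX hZ hindep j
end
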